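/- Let K be a number field whose degree [K : ℚ] is odd. Then the only solution (x, y, z) ∈ K³ of the equation x⁴ − 17z⁴ = 2(y² + 4z²)² is (0, 0, 0). -/

import Mathlib

/-!
The map `(x : y : z) ↦ (x / z, (y² + 4z²) / z²)` sends the Schinzel curve to the Reichardt–Lind
curve `2v² = u⁴ - 17`, and a point with `z = 0` would give a square root of `2`; in a field of odd
degree over `ℚ` neither exists.

If `(α, β)` is a point of `2v² = u⁴ - 17` over `L` with `[L : ℚ]` odd, then `β ∈ ℚ(α)` because
`β² ∈ ℚ(α)` and `[L : ℚ(α)]` is odd, so `β = p(α)` and the minimal polynomial of `α`, of odd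
degree, divides `X⁴ - 17 - 2p²`. Reducing `p` modulo a divisor `h` of odd degree `d ≥ 3` leaves a
polynomial of degree `2 max(2, deg p) < 2d`, whose cofactor has odd degree `< d`; descending
to a linear divisor gives a rational point. Lind's argument excludes those: every prime
dividing `v` makes `17` a square modulo it, so `v` is a square mod `17` by quadratic reciprocity,
whereas `2` is not a fourth power mod `17`.
-/

open Polynomial IntermediateField Module

theorem mem_range_of_sq_mem_range_of_odd_finrank {E L : Type*} [Field E] [Field L] [Algebra E L]
    [FiniteDimensional E L] (hodd : Odd (finrank E L)) {β : L}
    (hβ : β ^ 2 ∈ (algebraMap E L).range) : β ∈ (algebraMap E L).range := by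
  obtain ⟨a, ha⟩ := hβ
  have hint : IsIntegral E β := .of_finite E β
  have hdvd : minpoly E β ∣ X ^ 2 - C a := minpoly.dvd E β (by simp [ha])
  have hle : (minpoly E β).natDegree ≤ 2 :=
    (natDegree_le_of_dvd hdvd (X_pow_sub_C_ne_zero two_pos a)).trans natDegree_X_pow_sub_C.le
  obtain ⟨k, hk⟩ := hodd.of_dvd_nat (minpoly.degree_dvd hint)
  rw [← minpoly.natDegree_eq_one_iff]
  omega

theorem isSquare_of_isSquare_algebraMap_of_odd_finrank {E L : Type*} [Field E] [Field L]
    [Algebra E L] [FiniteDimensional E L] (hodd : Odd (finrank E L)) {a : E}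
    (ha : IsSquare (algebraMap E L a)) : IsSquare a := by
  obtain ⟨β, hβ⟩ := ha
  obtain ⟨b, rfl⟩ := mem_range_of_sq_mem_range_of_odd_finrank hodd ⟨a, by rw [hβ, sq]⟩
  exact ⟨b, (algebraMap E L).injective (by rw [hβ, map_mul])⟩

section Descent

variable {F : Type*} [Field F] {f : F[X]} {c : F} {m : ℕ}

-- `hlc` says that the points at infinity of `c y² = f(x)` are not rational.
theorem degree_sub_C_mul_sq (hf : f.natDegree = 2 * m) (hc : c ≠ 0)
    (hlc : ∀ t, f.leadingCoeff ≠ c * t ^ 2) (p : F[X]) :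
    (f - C c * p ^ 2).degree = ↑(2 * max m p.natDegree) := by
  apply degree_eq_of_le_of_coeff_ne_zero
  · refine degree_le_of_natDegree_le ((natDegree_sub_le _ _).trans (max_le ?_ ?_))
    · omega
    · refine (natDegree_C_mul_le _ _).trans (natDegree_pow_le.trans ?_)
      omega
  · rw [coeff_sub, coeff_C_mul, coeff_pow_of_natDegree_le (le_max_right _ _)]
    rcases le_or_gt p.natDegree m with hp | hp
    · rw [max_eq_left hp, ← hf]
      exact sub_ne_zero.mpr (hlc _)
    · have hp0 : p ≠ 0 := by rintro rfl; simp at hp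
      rw [max_eq_right hp.le, coeff_eq_zero_of_natDegree_lt (by omega), zero_sub, neg_ne_zero]
      exact mul_ne_zero hc (pow_ne_zero 2 (leadingCoeff_ne_zero.mpr hp0))

theorem exists_eval_eq_C_mul_sq_of_dvd (hf : f.natDegree = 2 * m) (hm : m ≤ 2) (hc : c ≠ 0)
    (hlc : ∀ t, f.leadingCoeff ≠ c * t ^ 2) {h p : F[X]} (hh : Odd h.natDegree)
    (hdvd : h ∣ f - C c * p ^ 2) : ∃ a b, f.eval a = c * b ^ 2 := by
  induction hd : h.natDegree using Nat.strong_induction_on generalizing h p with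
  | _ d ih =>
    rw [hd] at hh
    obtain rfl | hd3 : d = 1 ∨ 3 ≤ d := by obtain ⟨k, rfl⟩ := hh; omega
    · obtain ⟨a, ha⟩ := exists_root_of_degree_eq_one
        ((degree_eq_iff_natDegree_eq_of_pos one_pos).mpr hd)
      refine ⟨a, p.eval a, ?_⟩
      simpa [sub_eq_zero] using eval_eq_zero_of_dvd_of_eval_eq_zero hdvd ha
    · set q := p % h
      have hpq : h ∣ p - q := ⟨p / h, sub_eq_iff_eq_add'.mpr (EuclideanDomain.mod_add_div p h).symm⟩
      obtain ⟨g, hg⟩ : h ∣ f - C c * q ^ 2 := by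
        rw [show f - C c * q ^ 2 = f - C c * p ^ 2 + C c * (p + q) * (p - q) by ring]
        exact dvd_add hdvd (dvd_mul_of_dvd_right hpq _)
      have hq : q.natDegree < d := hd ▸ natDegree_mod_lt p (by omega)
      have hr := degree_sub_C_mul_sq hf hc hlc q
      rw [hg] at hr
      have hh0 : h ≠ 0 := by rintro rfl; simp at hd; omega
      have hg0 : g ≠ 0 := by
        rintro rfl
        rw [mul_zero, degree_zero] at hr
        exact WithBot.bot_ne_coe hr
      have hdeg : d + g.natDegree = 2 * max m q.natDegree := by
        rw [← hd, ← natDegree_mul hh0 hg0]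
        exact natDegree_eq_of_degree_eq_some hr
      obtain ⟨k, rfl⟩ := hh
      exact ih g.natDegree (by omega) ⟨max m q.natDegree - k - 1, by omega⟩
        ⟨h, by rw [hg, mul_comm]⟩ rfl

theorem exists_eval_eq_C_mul_sq_of_odd_finrank {L : Type*} [Field L] [Algebra F L]
    [FiniteDimensional F L] (hodd : Odd (finrank F L)) (hf : f.natDegree = 2 * m) (hm : m ≤ 2)
    (hc : c ≠ 0) (hlc : ∀ t, f.leadingCoeff ≠ c * t ^ 2) {α β : L}
    (hαβ : aeval α f = algebraMap F L c * β ^ 2) : ∃ a b, f.eval a = c * b ^ 2 := by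
  have hα : IsIntegral F α := .of_finite F α
  rw [← finrank_mul_finrank F F⟮α⟯ L, Nat.odd_mul] at hodd
  have hβ2 : β ^ 2 ∈ (algebraMap F⟮α⟯ L).range := by
    refine ⟨aeval (AdjoinSimple.gen F α) f / algebraMap F F⟮α⟯ c, ?_⟩
    rw [map_div₀, ← aeval_algebraMap_apply, AdjoinSimple.algebraMap_gen, hαβ,
      ← IsScalarTower.algebraMap_apply, mul_div_cancel_left₀ _ (by simpa using hc)]
  have hβ : β ∈ F⟮α⟯ := by
    obtain ⟨b, rfl⟩ := mem_range_of_sq_mem_range_of_odd_finrank hodd.2 hβ2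
    exact b.2
  rw [← mem_toSubalgebra, adjoin_simple_toSubalgebra_of_isAlgebraic hα.isAlgebraic,
    Algebra.adjoin_singleton_eq_range_aeval] at hβ
  obtain ⟨p, rfl⟩ := hβ
  refine exists_eval_eq_C_mul_sq_of_dvd hf hm hc hlc (p := p) ?_ (minpoly.dvd F α ?_)
  · exact adjoin.finrank hα ▸ hodd.1
  · simp [hαβ]

end Descent

theorem isSquare_natCast_of_forall_prime_dvd {R : Type*} [CommSemiring R] {N : ℕ}
    (h : ∀ p, p.Prime → p ∣ N → IsSquare (p : R)) : IsSquare (N : R) := by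
  induction N using induction_on_primes with
  | zero => exact ⟨0, by simp⟩
  | one => simp
  | prime_mul p a hp ih =>
    rw [Nat.cast_mul]
    exact (h p hp (dvd_mul_right p a)).mul (ih fun q hq hqa => h q hq (hqa.mul_left p))

theorem isSquare_intCast_zmod_of_dvd {n d w k : ℤ} (hnd : IsCoprime n d)
    (h : n ^ 4 - k * d ^ 4 = 2 * w ^ 2) {q : ℕ} [Fact q.Prime] (hq : (q : ℤ) ∣ w) :
    IsSquare (k : ZMod q) := by
  have hw : (w : ZMod q) = 0 := (ZMod.intCast_zmod_eq_zero_iff_dvd w q).mpr hq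
  have hmod : (n : ZMod q) ^ 4 = k * (d : ZMod q) ^ 4 := by
    have := congrArg (Int.cast : ℤ → ZMod q) h
    push_cast [hw] at this
    linear_combination this
  have hd : (d : ZMod q) ≠ 0 := by
    intro hd0
    have hn0 : (n : ZMod q) = 0 := pow_eq_zero_iff four_ne_zero |>.mp (by rw [hmod, hd0]; ring)
    simpa [hn0, hd0] using hnd.map (Int.castRingHom (ZMod q))
  exact ⟨(n / d) ^ 2, by field_simp; linear_combination -hmod⟩

theorem reichardtLind_no_int_solution {n d w : ℤ} (hnd : IsCoprime n d) :
    n ^ 4 - 17 * d ^ 4 ≠ 2 * w ^ 2 := by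
  intro h
  have h17 : Prime (17 : ℤ) := by norm_num
  have hn : ¬ (17 : ℤ) ∣ n := by
    rintro ⟨n', rfl⟩
    have h2w : (17 : ℤ) ∣ 2 * w ^ 2 := ⟨17 ^ 3 * n' ^ 4 - d ^ 4, by linear_combination -h⟩
    obtain ⟨w', rfl⟩ := h17.dvd_of_dvd_pow ((h17.dvd_mul.mp h2w).resolve_left (by norm_num))
    have hd4 : d ^ 4 = 17 * (17 ^ 2 * n' ^ 4 - 2 * w' ^ 2) :=
      mul_left_cancel₀ (by norm_num : (17 : ℤ) ≠ 0) (by linear_combination -h)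
    have hd : (17 : ℤ) ∣ d := h17.dvd_of_dvd_pow ⟨_, hd4⟩
    exact h17.not_isUnit (hnd.isUnit_of_dvd' (dvd_mul_right 17 n') hd)
  have hw : IsSquare (w : ZMod 17) := by
    have habs : IsSquare (w.natAbs : ZMod 17) := by
      refine isSquare_natCast_of_forall_prime_dvd fun q hq hqw => ?_
      rcases eq_or_ne q 2 with rfl | hq2
      · decide
      have := Fact.mk hq
      have : Fact (Nat.Prime 17) := ⟨by norm_num⟩
      refine (ZMod.exists_sq_eq_prime_iff_of_mod_four_eq_one (p := 17) (by norm_num) hq2).mpr ?_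
      exact_mod_cast isSquare_intCast_zmod_of_dvd hnd h (Int.natCast_dvd.mpr hqw)
    rcases Int.natAbs_eq w with hw | hw
    · rwa [hw, Int.cast_natCast]
    · rw [hw, Int.cast_neg, Int.cast_natCast, neg_eq_neg_one_mul]
      exact (show IsSquare (-1 : ZMod 17) by decide).mul habs
  have two_not_fourth_power : ∀ u v : ZMod 17, v ≠ 0 → v ^ 4 ≠ 2 * u ^ 4 := by decide
  obtain ⟨u, hu⟩ := hw
  refine two_not_fourth_power u n (by rwa [Ne, ZMod.intCast_zmod_eq_zero_iff_dvd]) ?_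
  have hmod := congrArg (Int.cast : ℤ → ZMod 17) h
  push_cast [hu] at hmod
  have h17_eq_zero : (17 : ZMod 17) = 0 := rfl
  linear_combination hmod + (d : ZMod 17) ^ 4 * h17_eq_zero

theorem exists_intCast_eq_of_sq_eq_intCast {q : ℚ} {N : ℤ} (h : q ^ 2 = N) : ∃ m : ℤ, q = m := by
  have hden : q.den ^ 2 = 1 := by rw [← Rat.den_pow, h, Rat.den_intCast]
  exact ⟨q.num, (Rat.coe_int_num_of_den_eq_one
    ((Nat.pow_eq_one.mp hden).resolve_right two_ne_zero)).symm⟩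

theorem reichardtLind_no_rat_point (a b : ℚ) : a ^ 4 - 17 ≠ 2 * b ^ 2 := by
  intro h
  set N : ℤ := a.num ^ 4 - 17 * a.den ^ 4 with hN
  have hs : (2 * b * a.den ^ 2) ^ 2 = ((2 * N : ℤ) : ℚ) := by
    have hd : (a.den : ℚ) ≠ 0 := by positivity
    rw [← Rat.num_div_den a] at h
    field_simp at h
    push_cast [hN]
    linear_combination -2 * h
  obtain ⟨m, hm⟩ := exists_intCast_eq_of_sq_eq_intCast hs
  have hm2 : m ^ 2 = 2 * N := by exact_mod_cast hm ▸ hs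
  obtain ⟨w, rfl⟩ : 2 ∣ m := Int.prime_two.dvd_of_dvd_pow ⟨N, hm2⟩
  exact reichardtLind_no_int_solution (w := w) a.isCoprime_num_den
    (mul_left_cancel₀ two_ne_zero (by linear_combination -hm2))

/-- The Schinzel curve has no point in any number field of odd degree:
over such a field `K`, the only solution of `x⁴ − 17z⁴ = 2(y² + 4z²)²` is trivial. -/
theorem schinzel_no_odd_degree_point (K : Type*) [Field K] [NumberField K]
    (hodd : Odd (Module.finrank ℚ K)) :
    ∀ x y z : K, x ^ 4 - 17 * z ^ 4 = 2 * (y ^ 2 + 4 * z ^ 2) ^ 2 →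
      x = 0 ∧ y = 0 ∧ z = 0 := by
  intro x y z h
  have h2 : ¬ IsSquare (2 : ℚ) := by norm_num
  obtain rfl : z = 0 := by
    by_contra hz
    have hlc (t : ℚ) : (X ^ 4 - C 17 : ℚ[X]).leadingCoeff ≠ 2 * t ^ 2 := by
      rw [leadingCoeff_X_pow_sub_C four_pos]
      exact fun ht => h2 ⟨2 * t, by linear_combination 2 * ht⟩
    obtain ⟨a, b, hab⟩ := exists_eval_eq_C_mul_sq_of_odd_finrank hodd natDegree_X_pow_sub_C
      le_rfl two_ne_zero hlc (α := x / z) (β := (y ^ 2 + 4 * z ^ 2) / z ^ 2)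
      (by
        simp only [Nat.reduceMul, aeval_sub, map_pow, aeval_X, aeval_C, eq_ratCast, Rat.cast_ofNat]
        field_simp
        linear_combination h)
    exact reichardtLind_no_rat_point a b (by simpa using hab)
  obtain rfl : y = 0 := by
    by_contra hy
    refine h2 (isSquare_of_isSquare_algebraMap_of_odd_finrank hodd ⟨(x / y) ^ 2, ?_⟩)
    rw [map_ofNat]
    field_simp
    linear_combination -h
  have hx : x ^ 4 = 0 := by linear_combination h
  exact ⟨pow_eq_zero_iff four_ne_zero |>.mp hx, rfl, rfl⟩
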